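/- arXiv:1211.7301 — 4 statements merged into one kernel-verified Lean document; each statement's English description precedes it below -/
import Mathlib

section
/- For every T > 0 and every real K, the spatial Fourier transform of the Green's function equals the decaying quartic exponential: ∫_ℝ G(X,T) · exp(−iKX) dX = exp(−K⁴T). -/
/-!
For `T > 0` the function `ψ ξ = exp (-(2πξ)⁴ T)` is a Schwartz function, since each of its
derivatives is a polynomial times `exp (-c ξ⁴)`. As `K ↦ exp (-K⁴ T)` is even, the sine part of
`∫ exp (-K⁴ T) exp (iKX) dK` vanishes, so after the substitution `K = 2πξ` the cosine integral
defining `G(·, T)` is the inverse Fourier transform `𝓕⁻ ψ`. The integral in the statement is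
`𝓕 G(·, T)` at `K / 2π`, and Fourier inversion on Schwartz space gives `𝓕 (𝓕⁻ ψ) = ψ`.
-/

open MeasureTheory Real

/-- The Green's function of the linearized capillary-driven thin film equation. -/
noncomputable def greenFn (X T : ℝ) : ℝ :=
  (1 / (2 * Real.pi)) * ∫ K : ℝ, Real.exp (-K ^ 4 * T) * Real.cos (K * X)

open FourierTransform

theorem exists_iteratedDeriv_exp_eval_eq (Q : Polynomial ℝ) (n : ℕ) :
    ∃ P : Polynomial ℝ,
      iteratedDeriv n (fun x ↦ exp (Q.eval x)) = fun x ↦ P.eval x * exp (Q.eval x) := by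
  induction n with
  | zero => exact ⟨1, by simp⟩
  | succ n ih =>
    obtain ⟨P, hP⟩ := ih
    refine ⟨P.derivative + P * Q.derivative, funext fun x ↦ ?_⟩
    rw [iteratedDeriv_succ, hP, ((P.hasDerivAt x).fun_mul (Q.hasDerivAt x).exp).deriv]
    simp only [Polynomial.eval_add, Polynomial.eval_mul]
    ring

theorem Polynomial.exists_abs_pow_mul_abs_eval_mul_le {g : ℝ → ℝ}
    (hg : ∀ m : ℕ, ∃ C, ∀ x, |x| ^ m * |g x| ≤ C) (P : Polynomial ℝ) (k : ℕ) :
    ∃ C, ∀ x, |x| ^ k * |P.eval x * g x| ≤ C := by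
  induction P using Polynomial.induction_on' with
  | add P Q hP hQ =>
    obtain ⟨C₁, hC₁⟩ := hP
    obtain ⟨C₂, hC₂⟩ := hQ
    refine ⟨C₁ + C₂, fun x ↦ ?_⟩
    calc |x| ^ k * |(P + Q).eval x * g x|
        ≤ |x| ^ k * |P.eval x * g x| + |x| ^ k * |Q.eval x * g x| := by
          rw [Polynomial.eval_add, add_mul, ← mul_add]
          exact mul_le_mul_of_nonneg_left (abs_add_le _ _) (by positivity)
      _ ≤ C₁ + C₂ := add_le_add (hC₁ x) (hC₂ x)
  | monomial n a =>
    obtain ⟨C, hC⟩ := hg (k + n)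
    refine ⟨|a| * C, fun x ↦ ?_⟩
    calc |x| ^ k * |(Polynomial.monomial n a).eval x * g x|
        = |a| * (|x| ^ (k + n) * |g x|) := by
          rw [Polynomial.eval_monomial, abs_mul, abs_mul, abs_pow, pow_add]; ring
      _ ≤ |a| * C := mul_le_mul_of_nonneg_left (hC x) (abs_nonneg a)

theorem pow_mul_exp_neg_le_factorial {t : ℝ} (ht : 0 ≤ t) (k : ℕ) :
    t ^ k * exp (-t) ≤ k.factorial := by
  rw [exp_neg, ← div_eq_mul_inv, div_le_iff₀ (exp_pos t), ← div_le_iff₀' (by positivity)]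
  exact pow_div_factorial_le_exp _ ht k

section ExpNegMulPow

variable {c : ℝ} {p : ℕ}

theorem abs_pow_mul_exp_neg_mul_pow_le (hc : 0 < c) (hp : Even p) (hp0 : p ≠ 0) (k : ℕ) (x : ℝ) :
    |x| ^ k * exp (-(c * x ^ p)) ≤ 1 + k.factorial / c ^ k := by
  have hxp : 0 ≤ x ^ p := hp.pow_nonneg x
  have hpow : |x| ^ k ≤ 1 + (x ^ p) ^ k := by
    rw [← hp.pow_abs, ← pow_mul]
    rcases le_total |x| 1 with h | h
    · linarith [pow_le_one₀ (abs_nonneg x) h (n := k), pow_nonneg (abs_nonneg x) (p * k)]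
    · linarith [pow_le_pow_right₀ h (Nat.le_mul_of_pos_left k (Nat.pos_of_ne_zero hp0))]
  calc |x| ^ k * exp (-(c * x ^ p))
      ≤ (1 + (x ^ p) ^ k) * exp (-(c * x ^ p)) := by gcongr
    _ = exp (-(c * x ^ p)) + (c * x ^ p) ^ k * exp (-(c * x ^ p)) / c ^ k := by
      field_simp
      ring
    _ ≤ 1 + k.factorial / c ^ k := by
      gcongr
      · exact exp_le_one_iff.mpr (by simp only [neg_nonpos]; positivity)
      · exact pow_mul_exp_neg_le_factorial (by positivity) k

noncomputable def SchwartzMap.expNegMulPow (hc : 0 < c) (hp : Even p) (hp0 : p ≠ 0) :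
    SchwartzMap ℝ ℝ where
  toFun x := exp (-(c * x ^ p))
  smooth' := contDiff_exp.comp (contDiff_const.mul (contDiff_id.pow p)).neg
  decay' k n := by
    have hQ : (fun x ↦ exp (-(c * x ^ p))) =
        fun x ↦ exp ((-(Polynomial.C c * Polynomial.X ^ p)).eval x) := by
      simp
    obtain ⟨P, hP⟩ := exists_iteratedDeriv_exp_eval_eq (-(Polynomial.C c * Polynomial.X ^ p)) n
    obtain ⟨C, hC⟩ := P.exists_abs_pow_mul_abs_eval_mul_le
      (fun m ↦ ⟨_, fun x ↦ by
        rw [abs_of_pos (exp_pos _)]; exact abs_pow_mul_exp_neg_mul_pow_le hc hp hp0 m x⟩) k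
    refine ⟨C, fun x ↦ ?_⟩
    rw [norm_iteratedFDeriv_eq_norm_iteratedDeriv, hQ, hP]
    simpa using hC x

@[simp]
theorem SchwartzMap.coe_expNegMulPow (hc : 0 < c) (hp : Even p) (hp0 : p ≠ 0) :
    ⇑(SchwartzMap.expNegMulPow hc hp hp0) = fun x ↦ exp (-(c * x ^ p)) :=
  rfl

end ExpNegMulPow

theorem integral_cexp_mul_I_mul_eq_integral_mul_cos {f : ℝ → ℝ} (hf : Integrable f)
    (heven : ∀ x, f (-x) = f x) (X : ℝ) :
    ∫ K : ℝ, Complex.exp (↑(K * X) * Complex.I) * f K = ↑(∫ K : ℝ, f K * cos (K * X)) := by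
  have hcos : Integrable fun K ↦ f K * cos (K * X) :=
    hf.mul_bdd (by fun_prop) (ae_of_all _ fun K ↦ by simpa using abs_cos_le_one (K * X))
  have hsin : Integrable fun K ↦ f K * sin (K * X) :=
    hf.mul_bdd (by fun_prop) (ae_of_all _ fun K ↦ by simpa using abs_sin_le_one (K * X))
  have hodd : ∫ K : ℝ, f K * sin (K * X) = 0 := by
    have h := integral_neg_eq_self (fun K ↦ f K * sin (K * X)) volume
    simp only [heven, neg_mul, sin_neg, mul_neg, integral_neg] at h
    linarith
  calc ∫ K : ℝ, Complex.exp (↑(K * X) * Complex.I) * f K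
      = ∫ K : ℝ, (↑(f K * cos (K * X)) + ↑(f K * sin (K * X)) * Complex.I) := by
        congr 1 with K
        rw [Complex.exp_mul_I, ← Complex.ofReal_cos, ← Complex.ofReal_sin]
        push_cast
        ring
    _ = ↑(∫ K : ℝ, f K * cos (K * X)) + ↑(∫ K : ℝ, f K * sin (K * X)) * Complex.I := by
        rw [integral_add hcos.ofReal (hsin.ofReal.mul_const _), integral_mul_const,
          integral_complex_ofReal, integral_complex_ofReal]
    _ = ↑(∫ K : ℝ, f K * cos (K * X)) := by simp [hodd]

theorem fourierInv_comp_two_pi_mul_eq {f : ℝ → ℝ} (hf : Integrable f)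
    (heven : ∀ x, f (-x) = f x) (X : ℝ) :
    𝓕⁻ (fun v : ℝ ↦ (f (2 * π * v) : ℂ)) X = ↑(1 / (2 * π) * ∫ K : ℝ, f K * cos (K * X)) := by
  set g : ℝ → ℂ := fun K ↦ Complex.exp (↑(K * X) * Complex.I) * f K
  calc 𝓕⁻ (fun v : ℝ ↦ (f (2 * π * v) : ℂ)) X
      = ∫ v : ℝ, g (2 * π * v) := by
        rw [fourierInv_eq_fourier_neg, Real.fourier_real_eq_integral_exp_smul]
        congr 1 with v
        simp only [g, smul_eq_mul]
        ring_nf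
    _ = ↑(1 / (2 * π) * ∫ K : ℝ, f K * cos (K * X)) := by
        rw [Measure.integral_comp_mul_left, integral_cexp_mul_I_mul_eq_integral_mul_cos hf heven,
          abs_of_pos (by positivity)]
        simp

theorem integral_mul_cexp_neg_I_mul_eq_fourier (g : ℝ → ℂ) (K : ℝ) :
    ∫ X : ℝ, g X * Complex.exp (-Complex.I * K * X) = 𝓕 g (K / (2 * π)) := by
  rw [Real.fourier_real_eq_integral_exp_smul]
  congr 1 with X
  rw [smul_eq_mul, mul_comm]
  congr 2
  push_cast
  field_simp

/-- For every `T > 0` and every real `K`, the spatial Fourier transform of the Green's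
function equals the decaying quartic exponential:
`∫ X, G(X,T) exp(−iKX) dX = exp(−K⁴ T)`. -/
theorem greenFn_fourier_transform (T : ℝ) (hT : 0 < T) (K : ℝ) :
    ∫ X : ℝ, (greenFn X T : ℂ) * Complex.exp (-Complex.I * (K : ℂ) * (X : ℂ)) =
      (Real.exp (-K ^ 4 * T) : ℂ) := by
  have h4 : Even 4 := by decide
  have hf : Integrable fun K : ℝ ↦ exp (-K ^ 4 * T) := by
    simpa [mul_comm] using (SchwartzMap.expNegMulPow hT h4 four_ne_zero).integrable
  let ψ : SchwartzMap ℝ ℂ := SchwartzMap.postcompCLM Complex.ofRealCLM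
    (SchwartzMap.expNegMulPow (c := (2 * π) ^ 4 * T) (by positivity) h4 four_ne_zero)
  have hψ : ⇑ψ = fun v : ℝ ↦ (exp (-(2 * π * v) ^ 4 * T) : ℂ) := by
    ext v
    simp only [ψ, SchwartzMap.postcompCLM_apply, SchwartzMap.coe_expNegMulPow,
      Complex.ofRealCLM_apply]
    ring_nf
  have hG : (fun X ↦ (greenFn X T : ℂ)) = 𝓕⁻ ⇑ψ := by
    ext X
    rw [hψ, fourierInv_comp_two_pi_mul_eq hf (fun x ↦ by ring_nf), greenFn]
  rw [integral_mul_cexp_neg_I_mul_eq_fourier, hG, ← SchwartzMap.fourierInv_coe,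
    ← SchwartzMap.fourier_coe, fourier_fourierInv_eq, hψ]
  field_simp
end

section
/- The Green's function is the point-source solution: for every bounded continuous function f : ℝ → ℝ, lim_{T→0⁺} ∫_ℝ G(X,T) f(X) dX = f(0); that is, G(·,T) converges to the Dirac distribution as T → 0⁺. -/
open MeasureTheory Real Filter

/-!
Substituting `K ↦ c K` gives `G(c y, c⁴) = c⁻¹ g(y)` with `g = G(·, 1)`, so
`∫ G(X, T) f(X) dX = ∫ g(y) f(T^{1/4} y) dy`, which tends to `(∫ g) f(0)` by dominated convergence
once `g` is integrable. Up to rescaling, `g` is the real part of the Fourier transform of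
`k ↦ exp (-k⁴)`; two integrations by parts bound that transform by `C / (1 + ξ²)`, so it is
integrable, and Fourier inversion at `0` gives `∫ g = exp 0 = 1`.
-/

open FourierTransform

section FourierDecay

variable {E : Type*} [NormedAddCommGroup E] [NormedSpace ℂ E] {f f' f'' : ℝ → E}

theorem Real.mul_norm_fourier_le_of_hasDerivAt
    (hf : ∀ x, HasDerivAt f (f' x) x) (hf' : ∀ x, HasDerivAt f' (f'' x) x)
    (hfi : Integrable f) (hf'i : Integrable f') (hf''i : Integrable f'') (ξ : ℝ) :
    (1 + (2 * π * ξ) ^ 2) * ‖𝓕 f ξ‖ ≤ (∫ x, ‖f x‖) + ∫ x, ‖f'' x‖ := by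
  have hd : deriv f = f' := funext fun x => (hf x).deriv
  have hd' : deriv f' = f'' := funext fun x => (hf' x).deriv
  have hfourier_f' : 𝓕 f' = fun ξ : ℝ => (2 * π * Complex.I * ξ) • 𝓕 f ξ := by
    rw [← hd]; exact Real.fourier_deriv hfi (fun x => (hf x).differentiableAt) (hd ▸ hf'i)
  have hfourier_f'' : 𝓕 f'' = fun ξ : ℝ => (2 * π * Complex.I * ξ) • 𝓕 f' ξ := by
    rw [← hd']; exact Real.fourier_deriv hf'i (fun x => (hf' x).differentiableAt) (hd' ▸ hf''i)
  have hnorm : ‖𝓕 f'' ξ‖ = (2 * π * ξ) ^ 2 * ‖𝓕 f ξ‖ := by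
    have hc : ‖(2 * π * Complex.I * ξ : ℂ)‖ = |2 * π * ξ| := by
      simp [abs_mul, abs_of_pos pi_pos]
    rw [congrFun hfourier_f'' ξ, congrFun hfourier_f' ξ, norm_smul, norm_smul, hc, ← mul_assoc,
      ← sq, sq_abs]
  have hf_bound : ‖𝓕 f ξ‖ ≤ ∫ x, ‖f x‖ :=
    VectorFourier.norm_fourierIntegral_le_integral_norm _ _ _ _ _
  have hf''_bound : ‖𝓕 f'' ξ‖ ≤ ∫ x, ‖f'' x‖ :=
    VectorFourier.norm_fourierIntegral_le_integral_norm _ _ _ _ _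
  linarith

theorem Real.integrable_fourier_of_hasDerivAt
    (hf : ∀ x, HasDerivAt f (f' x) x) (hf' : ∀ x, HasDerivAt f' (f'' x) x)
    (hfi : Integrable f) (hf'i : Integrable f') (hf''i : Integrable f'') :
    Integrable (𝓕 f) := by
  have hcont : Continuous (𝓕 f) :=
    VectorFourier.fourierIntegral_continuous Real.continuous_fourierChar continuous_inner hfi
  have hdom : Integrable fun ξ : ℝ => ((∫ x, ‖f x‖) + ∫ x, ‖f'' x‖) * (1 + (2 * π * ξ) ^ 2)⁻¹ :=
    (integrable_inv_one_add_sq.comp_mul_left' (by positivity : 2 * π ≠ 0)).const_mul _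
  refine hdom.mono' hcont.aestronglyMeasurable (Eventually.of_forall fun ξ => ?_)
  rw [← div_eq_mul_inv, le_div_iff₀ (by positivity), mul_comm]
  exact Real.mul_norm_fourier_le_of_hasDerivAt hf hf' hfi hf'i hf''i ξ

end FourierDecay

noncomputable def quarticExp (k : ℝ) : ℂ := (exp (-k ^ 4) : ℝ)

theorem integrable_pow_mul_exp_neg_pow_four (n : ℕ) :
    Integrable fun x : ℝ => x ^ n * exp (-x ^ 4) := by
  have hgauss := (integrable_rpow_mul_exp_neg_mul_sq one_pos (s := n)
    (by linarith [n.cast_nonneg (α := ℝ)])).norm.const_mul (exp (1 / 4))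
  refine hgauss.mono' (by fun_prop) (Eventually.of_forall fun x => ?_)
  have hexp : exp (-x ^ 4) ≤ exp (1 / 4) * exp (-1 * x ^ 2) := by
    rw [← exp_add]; exact exp_le_exp.2 (by nlinarith [sq_nonneg (x ^ 2 - 1 / 2)])
  rw [rpow_natCast, norm_mul, norm_mul, norm_of_nonneg (exp_pos _).le,
    norm_of_nonneg (exp_pos _).le]
  nlinarith [norm_nonneg (x ^ n)]

theorem integrable_quarticExp : Integrable quarticExp := by
  have h := integrable_pow_mul_exp_neg_pow_four 0
  simp only [pow_zero, one_mul] at h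
  exact h.ofReal

theorem integrable_fourier_quarticExp : Integrable (𝓕 quarticExp) := by
  have hq (k : ℝ) : HasDerivAt (fun x : ℝ => exp (-x ^ 4)) (-4 * k ^ 3 * exp (-k ^ 4)) k :=
    ((hasDerivAt_pow 4 k).fun_neg.exp).congr_deriv (by simp; ring)
  have hq' (k : ℝ) : HasDerivAt (fun x : ℝ => -4 * x ^ 3 * exp (-x ^ 4))
      ((16 * k ^ 6 - 12 * k ^ 2) * exp (-k ^ 4)) k :=
    (((hasDerivAt_pow 3 k).const_mul (-4)).mul (hq k)).congr_deriv (by simp; ring)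
  have hi : Integrable fun k : ℝ => -4 * k ^ 3 * exp (-k ^ 4) := by
    simpa only [mul_assoc] using (integrable_pow_mul_exp_neg_pow_four 3).const_mul (-4)
  have hi' : Integrable fun k : ℝ => (16 * k ^ 6 - 12 * k ^ 2) * exp (-k ^ 4) := by
    convert ((integrable_pow_mul_exp_neg_pow_four 6).const_mul 16).sub
      ((integrable_pow_mul_exp_neg_pow_four 2).const_mul 12) using 1
    ext k; simp only [Pi.sub_apply]; ring
  exact Real.integrable_fourier_of_hasDerivAt (fun k => (hq k).ofReal_comp)
    (fun k => (hq' k).ofReal_comp) integrable_quarticExp hi.ofReal hi'.ofReal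

theorem greenFn_one_eq_re_fourier (y : ℝ) :
    greenFn y 1 = (𝓕 quarticExp (y / (2 * π))).re / (2 * π) := by
  have hint := (Real.fourierIntegral_convergent_iff (y / (2 * π))).2 integrable_quarticExp
  have hre : ∫ v : ℝ, (𝐞 (-inner ℝ v (y / (2 * π))) • quarticExp v).re =
      (∫ v : ℝ, 𝐞 (-inner ℝ v (y / (2 * π))) • quarticExp v).re :=
    integral_re hint
  rw [Real.fourier_eq, ← hre, greenFn, one_div_mul_eq_div]
  congr 1
  refine integral_congr_ae (Eventually.of_forall fun k => ?_)
  have harg : 2 * π * -inner ℝ k (y / (2 * π)) = -(k * y) := by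
    simp only [RCLike.inner_apply, conj_trivial]
    field_simp
  dsimp only
  rw [Circle.smul_def, Real.fourierChar_apply, quarticExp, smul_eq_mul, Complex.re_mul_ofReal,
    Complex.exp_ofReal_mul_I_re, harg, cos_neg, mul_one, mul_comm]

theorem integrable_greenFn_one : Integrable fun y => greenFn y 1 := by
  simp_rw [greenFn_one_eq_re_fourier]
  exact (integrable_fourier_quarticExp.re.comp_div (by positivity)).div_const _

theorem integral_greenFn_one : ∫ y, greenFn y 1 = 1 := by
  have hcont : Continuous quarticExp := by unfold quarticExp; fun_prop
  have h0 : ∫ ξ, 𝓕 quarticExp ξ = 1 := by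
    simpa [Real.fourierInv_eq, quarticExp] using
      congrFun (hcont.fourierInv_fourier_eq integrable_quarticExp integrable_fourier_quarticExp) 0
  simp_rw [greenFn_one_eq_re_fourier]
  have hre : ∫ ξ, (𝓕 quarticExp ξ).re = (∫ ξ, 𝓕 quarticExp ξ).re :=
    integral_re integrable_fourier_quarticExp
  rw [integral_div, Measure.integral_comp_div (fun ξ => (𝓕 quarticExp ξ).re), hre, h0]
  simp [abs_of_pos pi_pos]

theorem greenFn_mul_pow_four {c : ℝ} (hc : 0 < c) (y : ℝ) :
    greenFn (c * y) (c ^ 4) = c⁻¹ * greenFn y 1 := by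
  have h := Measure.integral_comp_mul_left (fun u : ℝ => exp (-u ^ 4) * cos (u * y)) c
  rw [abs_of_pos (inv_pos.2 hc), smul_eq_mul] at h
  simp only [greenFn, mul_one]
  rw [mul_left_comm, ← h]
  congr 2; ext K; ring_nf

theorem integral_greenFn_pow_four_mul {c : ℝ} (hc : 0 < c) (f : ℝ → ℝ) :
    ∫ X, greenFn X (c ^ 4) * f X = ∫ y, greenFn y 1 * f (c * y) := by
  have h := Measure.integral_comp_mul_left (fun X => greenFn X (c ^ 4) * f X) c
  simp only [greenFn_mul_pow_four hc, mul_assoc, integral_const_mul, abs_of_pos (inv_pos.2 hc),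
    smul_eq_mul] at h
  exact (mul_left_cancel₀ (inv_ne_zero hc.ne') h).symm

theorem tendsto_integral_mul_comp_mul {g f : ℝ → ℝ} (hg : Integrable g) (hf : Continuous f)
    (hf_bdd : ∃ C, ∀ x, |f x| ≤ C) :
    Tendsto (fun c => ∫ y, g y * f (c * y)) (nhds 0) (nhds ((∫ y, g y) * f 0)) := by
  obtain ⟨C, hC⟩ := hf_bdd
  rw [← integral_mul_const]
  refine tendsto_integral_filter_of_dominated_convergence (fun y => |g y| * C)
    (Eventually.of_forall fun c => ?_) (Eventually.of_forall fun c => ?_)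
    (hg.abs.mul_const C) (Eventually.of_forall fun y => ?_)
  · exact hg.aestronglyMeasurable.mul (hf.comp (continuous_const_mul c)).aestronglyMeasurable
  · exact Eventually.of_forall fun y => by
      rw [norm_mul, norm_eq_abs, norm_eq_abs]; gcongr; exact hC _
  · have : Tendsto (fun c : ℝ => c * y) (nhds 0) (nhds 0) := by
      simpa using (continuous_mul_const y).tendsto 0
    exact ((hf.tendsto 0).comp this).const_mul (g y)

/-- The Green's function is the point-source solution: for every bounded continuous
`f : ℝ → ℝ`, `lim_{T→0⁺} ∫ X, G(X,T) f(X) dX = f(0)`, i.e. `G(·,T)` converges to the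
Dirac distribution as `T → 0⁺`. -/
theorem greenFn_dirac_limit (f : ℝ → ℝ) (hf_cont : Continuous f)
    (hf_bdd : ∃ C : ℝ, ∀ x : ℝ, |f x| ≤ C) :
    Tendsto (fun T : ℝ => ∫ X : ℝ, greenFn X T * f X)
      (nhdsWithin 0 (Set.Ioi 0)) (nhds (f 0)) := by
  have hroot : Tendsto (fun T : ℝ => T ^ (4⁻¹ : ℝ)) (nhdsWithin 0 (Set.Ioi 0)) (nhds 0) := by
    simpa using ((continuous_rpow_const (by norm_num)).tendsto' 0 0 (by simp)).mono_left
      nhdsWithin_le_nhds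
  have hlim := (tendsto_integral_mul_comp_mul integrable_greenFn_one hf_cont hf_bdd).comp hroot
  rw [integral_greenFn_one, one_mul] at hlim
  refine hlim.congr' (eventually_nhdsWithin_of_forall fun T (hT : 0 < T) => ?_)
  have hT4 : (T ^ (4⁻¹ : ℝ)) ^ 4 = T := by
    rw [← rpow_natCast, ← rpow_mul hT.le]; norm_num
  rw [Function.comp_apply, ← integral_greenFn_pow_four_mul (rpow_pos_of_pos hT _), hT4]
end

section
/- Let Δ₀ : ℝ → ℝ be Lebesgue integrable, let M₀ = ∫_ℝ Δ₀(Y) dY, and define Δ(X,T) = ∫_ℝ G(X−Y,T) Δ₀(Y) dY for T > 0. Then for every T > 0 and every real U, |T^{1/4} · Δ(U·T^{1/4}, T) − M₀ · φ(U)| ≤ (1/(2π)) ∫_ℝ dQ exp(−Q⁴) ∫_ℝ dY |exp(−iQY·T^{−1/4}) − 1| · |Δ₀(Y)|; in particular the bound is uniform in U. -/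
/-!
Substituting `K = Q T^{-1/4}` shows that the Green's function is self-similar,
`T^{1/4} G(X, T) = φ(X T^{-1/4})`, so the rescaled solution is `∫ φ(U - Y T^{-1/4}) Δ₀(Y) dY` and
its deviation from `M₀ φ(U)` is `∫ (φ(U - Y T^{-1/4}) - φ(U)) Δ₀(Y) dY`. Writing
`cos (b - c) - cos b = Re (e^{ib} (e^{-ic} - 1))` bounds `|φ(U - c) - φ(U)|` by
`(1/2π) ∫ e^{-Q⁴} |e^{-iQc} - 1| dQ`, independently of `U`; since the resulting integrand is
dominated by `2 e^{-Q⁴} |Δ₀(Y)|`, Fubini puts the double integral in the stated order.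
-/

open MeasureTheory Real

/-- The self-similar attractor profile `φ(U) = (1/(2π)) ∫ Q, exp(−Q⁴) cos(Q U)`. -/
noncomputable def phiFn (U : ℝ) : ℝ :=
  (1 / (2 * Real.pi)) * ∫ Q : ℝ, Real.exp (-Q ^ 4) * Real.cos (Q * U)

theorem integrable_exp_neg_pow_four : Integrable fun Q : ℝ => exp (-Q ^ 4) := by
  refine ((integrable_exp_neg_mul_sq one_pos).const_mul (exp (1 / 4))).mono'
    (by fun_prop : Continuous fun Q : ℝ => exp (-Q ^ 4)).aestronglyMeasurable ?_
  filter_upwards with Q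
  rw [norm_of_nonneg (exp_pos _).le, ← exp_add]
  exact exp_le_exp.mpr (by nlinarith [sq_nonneg (Q ^ 2 - 1 / 2)])

theorem integrable_exp_neg_pow_four_mul {f : ℝ → ℝ} {C : ℝ} (hf : AEStronglyMeasurable f)
    (hfC : ∀ Q, ‖f Q‖ ≤ C) : Integrable fun Q => exp (-Q ^ 4) * f Q := by
  simpa only [mul_comm (exp _)] using
    integrable_exp_neg_pow_four.bdd_mul hf (Filter.Eventually.of_forall hfC)

theorem greenFn_self_similar {s : ℝ} (hs : 0 < s) (X : ℝ) :
    s * greenFn X (s ^ 4) = phiFn (X / s) := by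
  have hsubst := Measure.integral_comp_mul_left
    (fun Q : ℝ => exp (-Q ^ 4) * cos (Q * (X / s))) s
  have hK : ∀ K : ℝ,
      exp (-(s * K) ^ 4) * cos (s * K * (X / s)) = exp (-K ^ 4 * s ^ 4) * cos (K * X) := by
    intro K
    field_simp
  simp only [hK, abs_inv, abs_of_pos hs, smul_eq_mul] at hsubst
  rw [greenFn, phiFn, hsubst]
  field_simp
  simp only [mul_comm X]

theorem continuous_phiFn : Continuous phiFn := by
  refine continuous_const.mul (continuous_of_dominated (bound := fun Q => exp (-Q ^ 4))
    (fun U => (by fun_prop : Continuous _).aestronglyMeasurable) (fun U => ?_)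
    integrable_exp_neg_pow_four (Filter.Eventually.of_forall fun Q => by fun_prop))
  filter_upwards with Q
  rw [norm_mul, norm_of_nonneg (exp_pos _).le]
  exact mul_le_of_le_one_right (exp_pos _).le (abs_cos_le_one _)

theorem abs_phiFn_le (U : ℝ) : |phiFn U| ≤ 1 / (2 * π) * ∫ Q : ℝ, exp (-Q ^ 4) := by
  rw [phiFn, abs_mul, abs_of_pos (by positivity : (0 : ℝ) < 1 / (2 * π))]
  gcongr
  refine abs_integral_le_integral_abs.trans (integral_mono_of_nonneg
    (Filter.Eventually.of_forall fun Q => abs_nonneg _) integrable_exp_neg_pow_four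
    (Filter.Eventually.of_forall fun Q => ?_))
  dsimp only
  rw [abs_mul, abs_of_pos (exp_pos _)]
  exact mul_le_of_le_one_right (exp_pos _).le (abs_cos_le_one _)

theorem norm_exp_neg_I_mul_sub_one_le_two (x : ℝ) :
    ‖Complex.exp (-Complex.I * x) - 1‖ ≤ 2 := by
  calc ‖Complex.exp (-Complex.I * x) - 1‖ ≤ ‖Complex.exp (-Complex.I * x)‖ + ‖(1 : ℂ)‖ :=
        norm_sub_le _ _
    _ = 2 := by
        rw [show -Complex.I * x = ((-x : ℝ) : ℂ) * Complex.I by push_cast; ring,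
          Complex.norm_exp_ofReal_mul_I, norm_one]
        norm_num

theorem abs_cos_sub_cos_le_norm_exp_sub_one (b c : ℝ) :
    |cos (b - c) - cos b| ≤ ‖Complex.exp (-Complex.I * c) - 1‖ := by
  have hre : cos (b - c) - cos b =
      (Complex.exp (b * Complex.I) * (Complex.exp (-Complex.I * c) - 1)).re := by
    rw [mul_sub, mul_one, ← Complex.exp_add,
      show (b : ℂ) * Complex.I + -Complex.I * c = ((b - c : ℝ) : ℂ) * Complex.I by push_cast; ring,
      Complex.sub_re, Complex.exp_ofReal_mul_I_re, Complex.exp_ofReal_mul_I_re]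
  rw [hre]
  refine (Complex.abs_re_le_norm _).trans ?_
  rw [norm_mul, Complex.norm_exp_ofReal_mul_I, one_mul]

theorem abs_phiFn_sub_le (U c : ℝ) :
    |phiFn (U - c) - phiFn U| ≤
      1 / (2 * π) * ∫ Q : ℝ, exp (-Q ^ 4) * ‖Complex.exp (-Complex.I * Q * c) - 1‖ := by
  have hcos : ∀ V : ℝ, Integrable fun Q : ℝ => exp (-Q ^ 4) * cos (Q * V) := fun V =>
    integrable_exp_neg_pow_four_mul (by fun_prop : Continuous _).aestronglyMeasurable
      fun Q => (norm_eq_abs _).trans_le (abs_cos_le_one _)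
  have hkernel : Integrable fun Q : ℝ => exp (-Q ^ 4) * ‖Complex.exp (-Complex.I * Q * c) - 1‖ :=
    integrable_exp_neg_pow_four_mul (by fun_prop : Continuous _).aestronglyMeasurable
      fun Q => by
        rw [norm_norm, show -Complex.I * Q * c = -Complex.I * ((Q * c : ℝ) : ℂ) by push_cast; ring]
        exact norm_exp_neg_I_mul_sub_one_le_two _
  rw [phiFn, phiFn, ← mul_sub, ← integral_sub (hcos _) (hcos _), abs_mul,
    abs_of_pos (by positivity : (0 : ℝ) < 1 / (2 * π))]
  gcongr
  refine abs_integral_le_integral_abs.trans (integral_mono_of_nonneg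
    (Filter.Eventually.of_forall fun Q => abs_nonneg _) hkernel
    (Filter.Eventually.of_forall fun Q => ?_))
  dsimp only
  rw [← mul_sub, abs_mul, abs_of_pos (exp_pos _), mul_sub,
    show -Complex.I * Q * c = -Complex.I * ((Q * c : ℝ) : ℂ) by push_cast; ring]
  exact mul_le_mul_of_nonneg_left (abs_cos_sub_cos_le_norm_exp_sub_one _ _) (exp_pos _).le

section Fubini

variable {α β : Type*} [MeasurableSpace α] [MeasurableSpace β] {μ : Measure α} {ν : Measure β}
  {f : α → ℝ} {g : β → ℝ} {k : α → β → ℝ} {C : ℝ}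

theorem integrable_prod_mul_mul_of_bdd (hf : Integrable f μ) (hg : Integrable g ν)
    (hk : AEStronglyMeasurable (Function.uncurry k) (μ.prod ν)) (hkC : ∀ x y, ‖k x y‖ ≤ C) :
    Integrable (fun p : α × β => f p.1 * k p.1 p.2 * g p.2) (μ.prod ν) := by
  refine ((hf.mul_prod hg).bdd_mul hk (Filter.Eventually.of_forall fun p => hkC p.1 p.2)).congr
    (Filter.Eventually.of_forall fun ⟨x, y⟩ => ?_)
  simp only [Function.uncurry_apply_pair]
  ring

theorem integrable_integral_mul_mul_of_bdd [SFinite μ] [SFinite ν] (hf : Integrable f μ)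
    (hg : Integrable g ν)
    (hk : AEStronglyMeasurable (Function.uncurry k) (μ.prod ν)) (hkC : ∀ x y, ‖k x y‖ ≤ C) :
    Integrable (fun y => (∫ x, f x * k x y ∂μ) * g y) ν := by
  simpa only [integral_mul_const] using
    (integrable_prod_mul_mul_of_bdd hf hg hk hkC).integral_prod_right

theorem integral_mul_integral_mul_comm_of_bdd [SFinite μ] [SFinite ν] (hf : Integrable f μ)
    (hg : Integrable g ν)
    (hk : AEStronglyMeasurable (Function.uncurry k) (μ.prod ν)) (hkC : ∀ x y, ‖k x y‖ ≤ C) :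
    ∫ x, f x * ∫ y, k x y * g y ∂ν ∂μ = ∫ y, (∫ x, f x * k x y ∂μ) * g y ∂ν := by
  simp only [← integral_const_mul, ← integral_mul_const, ← mul_assoc]
  exact integral_integral_swap (integrable_prod_mul_mul_of_bdd hf hg hk hkC)

end Fubini

theorem mul_integral_greenFn_eq {s : ℝ} (hs : 0 < s) (Δ₀ : ℝ → ℝ) (U : ℝ) :
    s * ∫ Y, greenFn (U * s - Y) (s ^ 4) * Δ₀ Y = ∫ Y, phiFn (U - Y / s) * Δ₀ Y := by
  rw [← integral_const_mul]
  congr 1 with Y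
  rw [← mul_assoc, greenFn_self_similar hs]
  congr 2
  field_simp

theorem abs_integral_phiFn_sub_le {Δ₀ : ℝ → ℝ} (hΔ₀ : Integrable Δ₀) (U a : ℝ) :
    |(∫ Y, phiFn (U - Y * a) * Δ₀ Y) - (∫ Y, Δ₀ Y) * phiFn U| ≤
      1 / (2 * π) * ∫ Q : ℝ, exp (-Q ^ 4) *
        ∫ Y : ℝ, ‖Complex.exp (-Complex.I * Q * Y * a) - 1‖ * |Δ₀ Y| := by
  set k : ℝ → ℝ → ℝ := fun Q Y => ‖Complex.exp (-Complex.I * Q * Y * a) - 1‖ with hk_def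
  have hk : AEStronglyMeasurable (Function.uncurry k) (volume.prod volume) :=
    (by fun_prop : Continuous (Function.uncurry k)).aestronglyMeasurable
  have hkC : ∀ Q Y, ‖k Q Y‖ ≤ 2 := fun Q Y => by
    rw [hk_def, norm_norm, show -Complex.I * Q * Y * a = -Complex.I * ((Q * Y * a : ℝ) : ℂ) by
      push_cast; ring]
    exact norm_exp_neg_I_mul_sub_one_le_two _
  have hφΔ₀ : Integrable fun Y => phiFn (U - Y * a) * Δ₀ Y :=
    hΔ₀.bdd_mul (continuous_phiFn.comp (by fun_prop)).aestronglyMeasurable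
      (Filter.Eventually.of_forall fun Y => abs_phiFn_le _)
  rw [integral_mul_integral_mul_comm_of_bdd integrable_exp_neg_pow_four hΔ₀.abs hk hkC,
    ← integral_const_mul, mul_comm, ← integral_const_mul,
    ← integral_sub hφΔ₀ (hΔ₀.const_mul (phiFn U))]
  refine abs_integral_le_integral_abs.trans (integral_mono_of_nonneg
    (Filter.Eventually.of_forall fun Y => abs_nonneg _)
    ((integrable_integral_mul_mul_of_bdd integrable_exp_neg_pow_four hΔ₀.abs hk hkC).const_mul _)
    (Filter.Eventually.of_forall fun Y => ?_))
  have hφ := abs_phiFn_sub_le U (Y * a)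
  push_cast [← mul_assoc] at hφ
  dsimp only
  rw [← sub_mul, abs_mul, ← mul_assoc]
  exact mul_le_mul_of_nonneg_right hφ (abs_nonneg _)

/-- For an integrable initial profile `Δ₀` with algebraic volume `M₀`, and
`Δ(X,T) = ∫ Y, G(X−Y,T) Δ₀(Y) dY`, one has for every `T > 0` and every real `U` the bound
`|T^{1/4} Δ(U T^{1/4}, T) − M₀ φ(U)|
  ≤ (1/(2π)) ∫ Q, e^{−Q⁴} ∫ Y, |e^{−iQY T^{−1/4}} − 1| |Δ₀(Y)| dY dQ`,
which is uniform in `U`. -/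
theorem rescaled_solution_uniform_bound (Δ₀ : ℝ → ℝ) (hΔ₀ : Integrable Δ₀)
    (M₀ : ℝ) (hM₀ : M₀ = ∫ Y : ℝ, Δ₀ Y)
    (Δ : ℝ → ℝ → ℝ) (hΔ : ∀ X T : ℝ, Δ X T = ∫ Y : ℝ, greenFn (X - Y) T * Δ₀ Y)
    (T : ℝ) (hT : 0 < T) (U : ℝ) :
    |T ^ ((1 / 4 : ℝ)) * Δ (U * T ^ ((1 / 4 : ℝ))) T - M₀ * phiFn U| ≤
      (1 / (2 * Real.pi)) * ∫ Q : ℝ, Real.exp (-Q ^ 4) *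
        ∫ Y : ℝ, ‖
          (Complex.exp (-Complex.I * (Q : ℂ) * (Y : ℂ) * ((T ^ (-(1 / 4 : ℝ)) : ℝ) : ℂ)) - 1)‖
          * |Δ₀ Y| := by
  set s := T ^ (1 / 4 : ℝ)
  have hs : 0 < s := rpow_pos_of_pos hT _
  have hs4 : s ^ 4 = T := by
    rw [← rpow_natCast, ← rpow_mul hT.le]
    norm_num
  have hsolution := mul_integral_greenFn_eq hs Δ₀ U
  simp only [hs4, div_eq_mul_inv] at hsolution
  rw [hΔ, hsolution, hM₀, rpow_neg hT.le]
  exact abs_integral_phiFn_sub_le hΔ₀ U s⁻¹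
end

section
/- General diffusive-like kernel result: let α > 0 and β > 0 be real numbers, let φ : ℝ → ℝ be bounded and uniformly continuous, let Δ₀ : ℝ → ℝ be Lebesgue integrable with M₀ = ∫_ℝ Δ₀(Y) dY, and define Δ(X,T) = ∫_ℝ T^{−β} φ((X−Y)·T^{−α}) Δ₀(Y) dY for T > 0. Then lim_{T→∞} sup_{U∈ℝ} |T^{β} · Δ(U·T^{α}, T) − M₀ · φ(U)| = 0. -/
open MeasureTheory Real Filter Topology

/-!
Self-similarity of the kernel turns the rescaled solution into an average of translates of `φ`,
`T ^ β * Δ (U * T ^ α) T = ∫ φ (U - T ^ (-α) * Y) * Δ₀ Y`, whose shifts `T ^ (-α) * Y` shrink to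
zero. Uniform continuity bounds `|φ U - φ (U - h * Y)|` by `ε` where `|h * Y| < δ` and by
`2 * sup |φ|` elsewhere, a weight independent of `U`; by dominated convergence its integral
against `|Δ₀|` tends to `ε * ∫ |Δ₀|` as `h → 0`.
-/

theorem TendstoUniformly.comp_tendsto {ι κ α β : Type*} [UniformSpace β] {F : ι → α → β}
    {f : α → β} {p : Filter ι} {q : Filter κ} {g : κ → ι} (hF : TendstoUniformly F f p)
    (hg : Tendsto g q p) : TendstoUniformly (fun k => F (g k)) f q :=
  fun u hu => hg.eventually (hF u hu)

section StepWeight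

variable {μ : Measure ℝ} {f : ℝ → ℝ}

lemma norm_ite_mul_abs_le (p : Prop) [Decidable p] (ε c y : ℝ) :
    ‖(if p then ε else c) * |y|‖ ≤ (|ε| + |c|) * |y| := by
  simp only [norm_mul, Real.norm_eq_abs, abs_abs]
  gcongr
  split_ifs <;> simp

lemma integrable_ite_mul_abs (hf : Integrable f μ) (h δ ε c : ℝ) :
    Integrable (fun Y => (if |h * Y| < δ then ε else c) * |f Y|) μ :=
  (hf.abs.const_mul (|ε| + |c|)).mono'
    ((Measurable.ite (measurableSet_lt (by fun_prop) measurable_const) measurable_const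
      measurable_const).aestronglyMeasurable.mul hf.abs.aestronglyMeasurable)
    (ae_of_all _ fun _ => norm_ite_mul_abs_le _ _ _ _)

lemma tendsto_integral_ite_mul_abs {δ : ℝ} (hf : Integrable f μ) (hδ : 0 < δ) (ε c : ℝ) :
    Tendsto (fun h => ∫ Y, (if |h * Y| < δ then ε else c) * |f Y| ∂μ) (𝓝 0)
      (𝓝 (ε * ∫ Y, |f Y| ∂μ)) := by
  rw [← integral_const_mul]
  refine tendsto_integral_filter_of_dominated_convergence (fun Y => (|ε| + |c|) * |f Y|)
    (.of_forall fun h => (integrable_ite_mul_abs hf h δ ε c).aestronglyMeasurable)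
    (.of_forall fun _ => ae_of_all _ fun _ => norm_ite_mul_abs_le _ _ _ _)
    (hf.abs.const_mul _) (ae_of_all _ fun Y => tendsto_const_nhds.congr' ?_)
  have hY : Tendsto (fun h : ℝ => |h * Y|) (𝓝 0) (𝓝 0) := by
    simpa using ((continuous_mul_const Y).abs.tendsto 0)
  filter_upwards [hY.eventually_lt_const hδ] with h hh
  rw [if_pos hh]

end StepWeight

lemma abs_sub_comp_sub_le_ite {φ : ℝ → ℝ} {C δ ε : ℝ} (hC : ∀ x, |φ x| ≤ C)
    (hφ : ∀ ⦃x y⦄, dist x y < δ → dist (φ x) (φ y) < ε) (x z : ℝ) :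
    |φ x - φ (x - z)| ≤ if |z| < δ then ε else 2 * C := by
  split_ifs with hz
  · exact (hφ (by rwa [Real.dist_eq, sub_sub_cancel])).le
  · linarith [abs_sub (φ x) (φ (x - z)), hC x, hC (x - z)]

theorem tendstoUniformly_integral_comp_sub_mul_mul {μ : Measure ℝ} {φ f : ℝ → ℝ} {C : ℝ}
    (hC : ∀ x, |φ x| ≤ C) (hφ : UniformContinuous φ) (hf : Integrable f μ) :
    TendstoUniformly (fun h U => ∫ Y, φ (U - h * Y) * f Y ∂μ)
      (fun U => (∫ Y, f Y ∂μ) * φ U) (𝓝 0) := by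
  rw [Metric.tendstoUniformly_iff]
  intro ε hε
  set I := ∫ Y, |f Y| ∂μ
  have hI : 0 ≤ I := integral_nonneg fun _ => abs_nonneg _
  set ε' := ε / (I + 1)
  have hε' : ε' * I < ε := by
    rw [div_mul_eq_mul_div, div_lt_iff₀ (by positivity)]
    nlinarith
  obtain ⟨δ, hδ, hφδ⟩ := Metric.uniformContinuous_iff.mp hφ ε' (by positivity)
  filter_upwards [(tendsto_integral_ite_mul_abs hf hδ ε' (2 * C)).eventually_lt_const
    hε'] with h hh U
  have hint : Integrable (fun Y => φ (U - h * Y) * f Y) μ :=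
    hf.bdd_mul (hφ.continuous.comp (by fun_prop)).aestronglyMeasurable (ae_of_all _ fun _ => hC _)
  calc dist ((∫ Y, f Y ∂μ) * φ U) (∫ Y, φ (U - h * Y) * f Y ∂μ)
      = ‖∫ Y, (φ U - φ (U - h * Y)) * f Y ∂μ‖ := by
        rw [dist_eq_norm, ← integral_mul_const, ← integral_sub (hf.mul_const _) hint]
        congr 2 with Y
        ring
    _ ≤ ∫ Y, (if |h * Y| < δ then ε' else 2 * C) * |f Y| ∂μ := by
        refine norm_integral_le_of_norm_le (integrable_ite_mul_abs hf h δ ε' _)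
          (ae_of_all _ fun Y => ?_)
        rw [norm_mul, Real.norm_eq_abs, Real.norm_eq_abs]
        gcongr
        exact abs_sub_comp_sub_le_ite hC hφδ U (h * Y)
    _ < ε := hh

lemma rpow_mul_integral_selfSimilar_kernel {μ : Measure ℝ} {T : ℝ} (hT : 0 < T) (α β U : ℝ)
    (φ f : ℝ → ℝ) :
    T ^ β * ∫ Y, T ^ (-β) * φ ((U * T ^ α - Y) * T ^ (-α)) * f Y ∂μ
      = ∫ Y, φ (U - T ^ (-α) * Y) * f Y ∂μ := by
  rw [← integral_const_mul]
  congr 1 with Y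
  rw [← mul_assoc, ← mul_assoc, ← rpow_add hT, add_neg_cancel, rpow_zero, one_mul, sub_mul,
    mul_assoc, ← rpow_add hT, add_neg_cancel, rpow_zero, mul_one, mul_comm Y]

theorem general_selfsimilar_kernel_uniform_convergence_general
    (α β : ℝ) (hα : 0 < α)
    (φ : ℝ → ℝ) (hφ_bdd : ∃ C : ℝ, ∀ x : ℝ, |φ x| ≤ C) (hφ_uc : UniformContinuous φ)
    (Δ₀ : ℝ → ℝ) (hΔ₀ : Integrable Δ₀)
    (M₀ : ℝ) (hM₀ : M₀ = ∫ Y : ℝ, Δ₀ Y)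
    (Δ : ℝ → ℝ → ℝ)
    (hΔ : ∀ (X : ℝ) (T : ℝ), 0 < T →
      Δ X T = ∫ Y : ℝ, T ^ (-β) * φ ((X - Y) * T ^ (-α)) * Δ₀ Y) :
    TendstoUniformly
      (fun (T : ℝ) (U : ℝ) => T ^ β * Δ (U * T ^ α) T)
      (fun U => M₀ * φ U) atTop := by
  obtain ⟨C, hC⟩ := hφ_bdd
  subst hM₀
  have hlim := (tendstoUniformly_integral_comp_sub_mul_mul hC hφ_uc hΔ₀).comp_tendsto
    (tendsto_rpow_neg_atTop hα)
  rw [← tendstoUniformlyOn_univ] at hlim ⊢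
  refine hlim.congr ?_
  filter_upwards [eventually_gt_atTop 0] with T hT U _
  dsimp only
  rw [hΔ _ _ hT, rpow_mul_integral_selfSimilar_kernel hT]

/-- General diffusive-like kernel result: if the Green's function is self-similar of the
form `G(X,T) = T^{−β} φ(X T^{−α})` with `α, β > 0` and `φ` bounded and uniformly
continuous, then for any integrable initial profile `Δ₀` of algebraic volume `M₀`, the
rescaled solution `U ↦ T^{β} Δ(U T^{α}, T)` converges uniformly, as `T → ∞`,
to `M₀ · φ`. -/
theorem general_selfsimilar_kernel_uniform_convergence
    (α β : ℝ) (hα : 0 < α) (hβ : 0 < β)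
    (φ : ℝ → ℝ) (hφ_bdd : ∃ C : ℝ, ∀ x : ℝ, |φ x| ≤ C) (hφ_uc : UniformContinuous φ)
    (Δ₀ : ℝ → ℝ) (hΔ₀ : Integrable Δ₀)
    (M₀ : ℝ) (hM₀ : M₀ = ∫ Y : ℝ, Δ₀ Y)
    (Δ : ℝ → ℝ → ℝ)
    (hΔ : ∀ (X : ℝ) (T : ℝ), 0 < T →
      Δ X T = ∫ Y : ℝ, T ^ (-β) * φ ((X - Y) * T ^ (-α)) * Δ₀ Y) :
    TendstoUniformly
      (fun (T : ℝ) (U : ℝ) => T ^ β * Δ (U * T ^ α) T)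
      (fun U => M₀ * φ U) atTop :=
  general_selfsimilar_kernel_uniform_convergence_general α β hα φ hφ_bdd hφ_uc Δ₀ hΔ₀ M₀ hM₀ Δ hΔ
end
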